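/- Particular case of the main theorem: if ‖·‖_α is a uniform crossnorm on X⊗Y, then the operator norm on B[X⊗_α Y] restricted to the tensor product of operator algebras B[X]⊗B[Y] is a reasonable crossnorm on B[X]⊗B[Y]. -/

import Mathlib

/-!
Let `Q L` be the operator norm of `L ∈ B[E,G] ⊗ B[F,H]` from `(E ⊗ F, Nd)` to `(G ⊗ H, Nc)`. It is
finite because `Nc ((A ⊗ B) u) ≤ ‖A‖ ‖B‖ Nd u` (uniformity), which is also the crossnorm bound
`Q (A ⊗ B) ≤ ‖A‖ ‖B‖`, and the seminorm axioms are inherited from `Nc`. For reasonableness, pair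
`L` with the functionals `A ↦ φ (A x)`, which norm `B[E,G]`: as `Nc` is reasonable and `Nd` is a
crossnorm, `|(φ (· x) ⊗ ψ (· y)) L| = |(φ ⊗ ψ) (L (x ⊗ y))| ≤ ‖φ‖ ‖ψ‖ Q L ‖x‖ ‖y‖`, and slicing
one factor at a time extends this to `|(f ⊗ g) L| ≤ ‖f‖ ‖g‖ Q L` for all `f, g`. Definiteness
follows, since the functionals `f ⊗ g` separate the points of an algebraic tensor product of
normed spaces (Hahn–Banach on a finite-dimensional subspace).
-/

open scoped TensorProduct
open TensorProduct

noncomputable section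

variable (𝕜 : Type*) [RCLike 𝕜]
variable {E F G H : Type*}
  [NormedAddCommGroup E] [NormedSpace 𝕜 E]
  [NormedAddCommGroup F] [NormedSpace 𝕜 F]
  [NormedAddCommGroup G] [NormedSpace 𝕜 G]
  [NormedAddCommGroup H] [NormedSpace 𝕜 H]

/-- `N` is a norm on the `𝕜`-module `M`. -/
def IsNormOn {M : Type*} [AddCommGroup M] [Module 𝕜 M] (N : M → ℝ) : Prop :=
  (∀ u, N u = 0 ↔ u = 0) ∧ (∀ (c : 𝕜) (u : M), N (c • u) = ‖c‖ * N u) ∧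
    (∀ u v : M, N (u + v) ≤ N u + N v)

/-- The linear functional `f ⊗ g` on `E ⊗ F`, with `(f ⊗ g)(x ⊗ y) = f x * g y`. -/
def dualTensorFun (f : E →L[𝕜] 𝕜) (g : F →L[𝕜] 𝕜) : E ⊗[𝕜] F →ₗ[𝕜] 𝕜 :=
  (TensorProduct.lid 𝕜 𝕜).toLinearMap ∘ₗ
    TensorProduct.map (f : E →ₗ[𝕜] 𝕜) (g : F →ₗ[𝕜] 𝕜)

/-- The injective norm on the algebraic tensor product of normed spaces. -/
def injNorm (u : E ⊗[𝕜] F) : ℝ :=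
  sSup {r | ∃ (f : E →L[𝕜] 𝕜) (g : F →L[𝕜] 𝕜),
    ‖f‖ ≤ 1 ∧ ‖g‖ ≤ 1 ∧ r = ‖dualTensorFun 𝕜 f g u‖}

/-- The projective norm on the algebraic tensor product of normed spaces. -/
def projNorm (u : E ⊗[𝕜] F) : ℝ :=
  sInf {r | ∃ l : List (E × F), u = (l.map fun p => p.1 ⊗ₜ[𝕜] p.2).sum ∧
    r = (l.map fun p => ‖p.1‖ * ‖p.2‖).sum}

/-- `N` is a reasonable crossnorm on `E ⊗ F`: it is a norm, `N (x ⊗ y) ≤ ‖x‖‖y‖`, and every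
`f ⊗ g` with `f, g` continuous functionals is bounded with dual norm at most `‖f‖‖g‖`. -/
def IsReasonableCrossnorm (N : E ⊗[𝕜] F → ℝ) : Prop :=
  IsNormOn 𝕜 N ∧ (∀ (x : E) (y : F), N (x ⊗ₜ[𝕜] y) ≤ ‖x‖ * ‖y‖) ∧
    ∀ (f : E →L[𝕜] 𝕜) (g : F →L[𝕜] 𝕜) (u : E ⊗[𝕜] F),
      ‖dualTensorFun 𝕜 f g u‖ ≤ ‖f‖ * ‖g‖ * N u

/-- `T` is bounded from `(E ⊗ F, Nd)` to `(G ⊗ H, Nc)`. -/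
def IsBddOn (Nd : E ⊗[𝕜] F → ℝ) (Nc : G ⊗[𝕜] H → ℝ)
    (T : E ⊗[𝕜] F →ₗ[𝕜] G ⊗[𝕜] H) : Prop :=
  ∃ c : ℝ, 0 ≤ c ∧ ∀ u, Nc (T u) ≤ c * Nd u

/-- The operator norm of `T` from `(E ⊗ F, Nd)` to `(G ⊗ H, Nc)`. -/
def opNormOn (Nd : E ⊗[𝕜] F → ℝ) (Nc : G ⊗[𝕜] H → ℝ)
    (T : E ⊗[𝕜] F →ₗ[𝕜] G ⊗[𝕜] H) : ℝ :=
  sInf {c | 0 ≤ c ∧ ∀ u, Nc (T u) ≤ c * Nd u}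

/-- The dual norm of a linear functional `φ` on `(E ⊗ F, N)`. -/
def dualNormOn (N : E ⊗[𝕜] F → ℝ) (φ : E ⊗[𝕜] F →ₗ[𝕜] 𝕜) : ℝ :=
  sInf {c | 0 ≤ c ∧ ∀ u, ‖φ u‖ ≤ c * N u}

/-- The pair of norms `(NA, NB)` is uniform: `A ⊗ B` is bounded with bound `‖A‖‖B‖`. -/
def IsUniformPair (NA : E ⊗[𝕜] F → ℝ) (NB : G ⊗[𝕜] H → ℝ) : Prop :=
  ∀ (A : E →L[𝕜] G) (B : F →L[𝕜] H) (u : E ⊗[𝕜] F),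
    NB (TensorProduct.map (A : E →ₗ[𝕜] G) (B : F →ₗ[𝕜] H) u) ≤ ‖A‖ * ‖B‖ * NA u

/-- The canonical action of `B[E,G] ⊗ B[F,H]` as linear maps from `E ⊗ F` to `G ⊗ H`,
sending `Σⱼ Aⱼ ⊗ Bⱼ` to `Σᵢ xᵢ ⊗ yᵢ ↦ Σⱼ Σᵢ Aⱼxᵢ ⊗ Bⱼyᵢ`. -/
def opT : ((E →L[𝕜] G) ⊗[𝕜] (F →L[𝕜] H)) →ₗ[𝕜] (E ⊗[𝕜] F →ₗ[𝕜] G ⊗[𝕜] H) :=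
  (TensorProduct.homTensorHomMap (RingHom.id 𝕜) E F G H) ∘ₗ
    TensorProduct.map (ContinuousLinearMap.coeLM 𝕜) (ContinuousLinearMap.coeLM 𝕜)

variable {X Y V W : Type*}
  [NormedAddCommGroup X] [NormedSpace 𝕜 X]
  [NormedAddCommGroup Y] [NormedSpace 𝕜 Y]
  [NormedAddCommGroup V] [NormedSpace 𝕜 V]
  [NormedAddCommGroup W] [NormedSpace 𝕜 W]

open scoped Pointwise

section

variable {𝕜} {Nd : E ⊗[𝕜] F → ℝ} {Nc : G ⊗[𝕜] H → ℝ}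

lemma IsNormOn.map_zero {M : Type*} [AddCommGroup M] [Module 𝕜 M] {N : M → ℝ}
    (hN : IsNormOn 𝕜 N) : N 0 = 0 :=
  (hN.1 0).mpr rfl

lemma IsNormOn.nonneg {M : Type*} [AddCommGroup M] [Module 𝕜 M] {N : M → ℝ}
    (hN : IsNormOn 𝕜 N) (u : M) : 0 ≤ N u := by
  have hneg : N (-u) = N u := by
    rw [← neg_one_smul 𝕜 u, hN.2.1, norm_neg, norm_one, one_mul]
  have h := hN.2.2 u (-u)
  rw [add_neg_cancel, hN.map_zero, hneg] at h
  linarith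

lemma opNormOn_nonneg (T : E ⊗[𝕜] F →ₗ[𝕜] G ⊗[𝕜] H) : 0 ≤ opNormOn 𝕜 Nd Nc T :=
  Real.sInf_nonneg fun _ hc => hc.1

lemma opNormOn_le_of_bound {T : E ⊗[𝕜] F →ₗ[𝕜] G ⊗[𝕜] H} {c : ℝ} (hc : 0 ≤ c)
    (hT : ∀ u, Nc (T u) ≤ c * Nd u) : opNormOn 𝕜 Nd Nc T ≤ c :=
  csInf_le ⟨0, fun _ hd => hd.1⟩ ⟨hc, hT⟩

lemma IsBddOn.le_opNormOn_mul {T : E ⊗[𝕜] F →ₗ[𝕜] G ⊗[𝕜] H} (hT : IsBddOn 𝕜 Nd Nc T)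
    (hNd : ∀ u, 0 ≤ Nd u) (u : E ⊗[𝕜] F) : Nc (T u) ≤ opNormOn 𝕜 Nd Nc T * Nd u := by
  obtain ⟨c₀, hc₀, hT₀⟩ := hT
  rcases (hNd u).eq_or_lt with hu | hu
  · simpa [← hu] using hT₀ u
  · rw [← div_le_iff₀ hu]
    exact le_csInf ⟨c₀, hc₀, hT₀⟩ fun c hc => (div_le_iff₀ hu).mpr (hc.2 u)

lemma opNormOn_zero (hNc : IsNormOn 𝕜 Nc) : opNormOn 𝕜 Nd Nc 0 = 0 :=
  (opNormOn_le_of_bound le_rfl fun u => by simp [hNc.map_zero]).antisymm (opNormOn_nonneg 0)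

lemma opNormOn_add_le (hNd : ∀ u, 0 ≤ Nd u) (hNc : IsNormOn 𝕜 Nc)
    {T₁ T₂ : E ⊗[𝕜] F →ₗ[𝕜] G ⊗[𝕜] H} (h₁ : IsBddOn 𝕜 Nd Nc T₁) (h₂ : IsBddOn 𝕜 Nd Nc T₂) :
    opNormOn 𝕜 Nd Nc (T₁ + T₂) ≤ opNormOn 𝕜 Nd Nc T₁ + opNormOn 𝕜 Nd Nc T₂ := by
  refine opNormOn_le_of_bound (add_nonneg (opNormOn_nonneg _) (opNormOn_nonneg _)) fun u => ?_
  calc Nc ((T₁ + T₂) u) ≤ Nc (T₁ u) + Nc (T₂ u) := hNc.2.2 _ _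
    _ ≤ opNormOn 𝕜 Nd Nc T₁ * Nd u + opNormOn 𝕜 Nd Nc T₂ * Nd u :=
      add_le_add (h₁.le_opNormOn_mul hNd u) (h₂.le_opNormOn_mul hNd u)
    _ = _ := (add_mul _ _ _).symm

lemma opNormOn_smul (hNc : IsNormOn 𝕜 Nc) (c : 𝕜) (T : E ⊗[𝕜] F →ₗ[𝕜] G ⊗[𝕜] H) :
    opNormOn 𝕜 Nd Nc (c • T) = ‖c‖ * opNormOn 𝕜 Nd Nc T := by
  rcases eq_or_ne c 0 with rfl | hc
  · rw [zero_smul, opNormOn_zero hNc, norm_zero, zero_mul]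
  have hc' : 0 < ‖c‖ := norm_pos_iff.mpr hc
  have hset : {d | 0 ≤ d ∧ ∀ u, Nc ((c • T) u) ≤ d * Nd u} =
      ‖c‖ • {d | 0 ≤ d ∧ ∀ u, Nc (T u) ≤ d * Nd u} := by
    ext d
    rw [Set.mem_smul_set_iff_inv_smul_mem₀ hc'.ne']
    simp only [Set.mem_ofPred_eq, LinearMap.smul_apply, hNc.2.1, smul_eq_mul, mul_assoc,
      le_inv_mul_iff₀ hc', mul_zero]
  rw [opNormOn, hset, Real.sInf_smul_of_nonneg hc'.le, smul_eq_mul, opNormOn]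

def sliceLeft (f : E →L[𝕜] 𝕜) : E ⊗[𝕜] F →ₗ[𝕜] F :=
  TensorProduct.lid 𝕜 F ∘ₗ (f : E →ₗ[𝕜] 𝕜).rTensor F

def sliceRight (g : F →L[𝕜] 𝕜) : E ⊗[𝕜] F →ₗ[𝕜] E :=
  TensorProduct.rid 𝕜 E ∘ₗ (g : F →ₗ[𝕜] 𝕜).lTensor E

lemma apply_sliceLeft (f : E →L[𝕜] 𝕜) (g : F →L[𝕜] 𝕜) (u : E ⊗[𝕜] F) :
    g (sliceLeft f u) = dualTensorFun 𝕜 f g u := by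
  induction u using TensorProduct.induction_on with
  | zero => simp
  | tmul x y => simp [sliceLeft, dualTensorFun]
  | add u v hu hv => simp only [map_add, hu, hv]

lemma apply_sliceRight (f : E →L[𝕜] 𝕜) (g : F →L[𝕜] 𝕜) (u : E ⊗[𝕜] F) :
    f (sliceRight g u) = dualTensorFun 𝕜 f g u := by
  induction u using TensorProduct.induction_on with
  | zero => simp
  | tmul x y => simp [sliceRight, dualTensorFun, mul_comm]
  | add u v hu hv => simp only [map_add, hu, hv]

/- Choose a finite-dimensional `M ⊆ E` with `u ∈ M ⊗ F`; composed with a continuous projection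
onto `M`, the coordinate functionals of a basis of `M` become continuous functionals on `E`. -/
lemma eq_zero_of_forall_sliceLeft_eq_zero {u : E ⊗[𝕜] F}
    (h : ∀ f : E →L[𝕜] 𝕜, sliceLeft f u = 0) : u = 0 := by
  obtain ⟨M, hM, hu⟩ := exists_finite_submodule_left_of_setFinite {u} (Set.finite_singleton u)
  obtain ⟨v, rfl⟩ := hu rfl
  obtain ⟨P, hP⟩ := Submodule.ClosedComplemented.of_finiteDimensional M
  have hPv : (P : E →ₗ[𝕜] M).rTensor F (M.subtype.rTensor F v) = v := by
    rw [← LinearMap.rTensor_comp_apply]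
    convert LinearMap.rTensor_id_apply F M v
    exact LinearMap.ext hP
  let b := Module.finBasis 𝕜 M
  suffices hv : equivFinsuppOfBasisLeft b v = 0 by
    rw [(equivFinsuppOfBasisLeft b).map_eq_zero_iff.mp hv, map_zero]
  ext i
  have hi := h ((LinearMap.toContinuousLinearMap (b.coord i)).comp P)
  rw [equivFinsuppOfBasisLeft_apply, ← hPv, ← LinearMap.rTensor_comp_apply]
  exact hi

lemma eq_zero_of_forall_dualTensorFun_eq_zero {u : E ⊗[𝕜] F}
    (h : ∀ (f : E →L[𝕜] 𝕜) (g : F →L[𝕜] 𝕜), dualTensorFun 𝕜 f g u = 0) : u = 0 :=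
  eq_zero_of_forall_sliceLeft_eq_zero fun f =>
    SeparatingDual.eq_zero_of_forall_dual_eq_zero fun g => (apply_sliceLeft f g u).trans (h f g)

lemma opT_tmul (A : E →L[𝕜] G) (B : F →L[𝕜] H) :
    opT 𝕜 (A ⊗ₜ[𝕜] B) = TensorProduct.map (A : E →ₗ[𝕜] G) (B : F →ₗ[𝕜] H) := by
  simp [opT, ContinuousLinearMap.coeLM]

lemma IsUniformPair.isBddOn_opT (hu : IsUniformPair 𝕜 Nd Nc) (hNc : IsNormOn 𝕜 Nc)
    (L : (E →L[𝕜] G) ⊗[𝕜] (F →L[𝕜] H)) : IsBddOn 𝕜 Nd Nc (opT 𝕜 L) := by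
  induction L using TensorProduct.induction_on with
  | zero => exact ⟨0, le_rfl, fun u => by simp [hNc.map_zero]⟩
  | tmul A B => exact ⟨‖A‖ * ‖B‖, by positivity, fun u => by simpa [opT_tmul] using hu A B u⟩
  | add L₁ L₂ h₁ h₂ =>
    obtain ⟨c₁, hc₁, h₁⟩ := h₁
    obtain ⟨c₂, hc₂, h₂⟩ := h₂
    refine ⟨c₁ + c₂, add_nonneg hc₁ hc₂, fun u => ?_⟩
    calc Nc (opT 𝕜 (L₁ + L₂) u) ≤ Nc (opT 𝕜 L₁ u) + Nc (opT 𝕜 L₂ u) := by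
          simpa only [map_add, LinearMap.add_apply] using hNc.2.2 _ _
      _ ≤ c₁ * Nd u + c₂ * Nd u := add_le_add (h₁ u) (h₂ u)
      _ = (c₁ + c₂) * Nd u := (add_mul _ _ _).symm

def evalDual (x : E) (φ : G →L[𝕜] 𝕜) : (E →L[𝕜] G) →L[𝕜] 𝕜 :=
  φ ∘L ContinuousLinearMap.apply 𝕜 G x

@[simp] lemma evalDual_apply (x : E) (φ : G →L[𝕜] 𝕜) (A : E →L[𝕜] G) :
    evalDual x φ A = φ (A x) :=
  rfl

lemma dualTensorFun_evalDual (x : E) (φ : G →L[𝕜] 𝕜) (y : F) (ψ : H →L[𝕜] 𝕜)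
    (L : (E →L[𝕜] G) ⊗[𝕜] (F →L[𝕜] H)) :
    dualTensorFun 𝕜 (evalDual x φ) (evalDual y ψ) L = dualTensorFun 𝕜 φ ψ (opT 𝕜 L (x ⊗ₜ y)) := by
  induction L using TensorProduct.induction_on with
  | zero => simp
  | tmul A B => simp [dualTensorFun, opT_tmul]
  | add L₁ L₂ h₁ h₂ => simp only [map_add, LinearMap.add_apply, h₁, h₂]

lemma ContinuousLinearMap.opNorm_le_of_forall_dual {T : E →L[𝕜] G} {C : ℝ} (hC : 0 ≤ C)
    (hT : ∀ x (φ : G →L[𝕜] 𝕜), ‖φ (T x)‖ ≤ C * ‖x‖ * ‖φ‖) : ‖T‖ ≤ C :=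
  T.opNorm_le_bound hC fun x =>
    NormedSpace.norm_le_dual_bound 𝕜 _ (by positivity) fun φ => hT x φ

/- The functionals `evalDual x φ` norm `E →L[𝕜] G`, so bounds on them pass to all `f ⊗ g` by
slicing one factor at a time. -/
lemma norm_dualTensorFun_le_of_forall_evalDual {L : (E →L[𝕜] G) ⊗[𝕜] (F →L[𝕜] H)} {C : ℝ}
    (hC : 0 ≤ C) (hL : ∀ x φ y ψ, ‖dualTensorFun 𝕜 (evalDual x φ) (evalDual y ψ) L‖ ≤
      C * ‖x‖ * ‖φ‖ * (‖y‖ * ‖ψ‖))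
    (f : (E →L[𝕜] G) →L[𝕜] 𝕜) (g : (F →L[𝕜] H) →L[𝕜] 𝕜) :
    ‖dualTensorFun 𝕜 f g L‖ ≤ ‖f‖ * ‖g‖ * C := by
  have hleft : ∀ x φ, ‖sliceLeft (evalDual x φ) L‖ ≤ C * ‖x‖ * ‖φ‖ := fun x φ =>
    ContinuousLinearMap.opNorm_le_of_forall_dual (by positivity) fun y ψ => by
      simpa only [← evalDual_apply, apply_sliceLeft, mul_assoc] using hL x φ y ψ
  have hright : ‖sliceRight g L‖ ≤ ‖g‖ * C :=
    ContinuousLinearMap.opNorm_le_of_forall_dual (by positivity) fun x φ =>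
      calc ‖φ (sliceRight g L x)‖ = ‖g (sliceLeft (evalDual x φ) L)‖ := by
            rw [← evalDual_apply, apply_sliceRight, apply_sliceLeft]
        _ ≤ ‖g‖ * (C * ‖x‖ * ‖φ‖) := g.le_opNorm_of_le (hleft x φ)
        _ = ‖g‖ * C * ‖x‖ * ‖φ‖ := by ring
  calc ‖dualTensorFun 𝕜 f g L‖ = ‖f (sliceRight g L)‖ := by rw [apply_sliceRight]
    _ ≤ ‖f‖ * (‖g‖ * C) := f.le_opNorm_of_le hright
    _ = ‖f‖ * ‖g‖ * C := (mul_assoc _ _ _).symm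

lemma norm_dualTensorFun_le_opNormOn_opT (hNd : IsReasonableCrossnorm 𝕜 Nd)
    (hNc : IsReasonableCrossnorm 𝕜 Nc) (hu : IsUniformPair 𝕜 Nd Nc)
    (f : (E →L[𝕜] G) →L[𝕜] 𝕜) (g : (F →L[𝕜] H) →L[𝕜] 𝕜) (L : (E →L[𝕜] G) ⊗[𝕜] (F →L[𝕜] H)) :
    ‖dualTensorFun 𝕜 f g L‖ ≤ ‖f‖ * ‖g‖ * opNormOn 𝕜 Nd Nc (opT 𝕜 L) := by
  refine norm_dualTensorFun_le_of_forall_evalDual (opNormOn_nonneg _) (fun x φ y ψ => ?_) f g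
  have hL := (hu.isBddOn_opT hNc.1 L).le_opNormOn_mul hNd.1.nonneg (x ⊗ₜ y)
  rw [dualTensorFun_evalDual]
  calc ‖dualTensorFun 𝕜 φ ψ (opT 𝕜 L (x ⊗ₜ y))‖ ≤ ‖φ‖ * ‖ψ‖ * Nc (opT 𝕜 L (x ⊗ₜ y)) :=
        hNc.2.2 φ ψ _
    _ ≤ ‖φ‖ * ‖ψ‖ * (opNormOn 𝕜 Nd Nc (opT 𝕜 L) * (‖x‖ * ‖y‖)) := by
        gcongr
        exact hL.trans (by gcongr; exacts [opNormOn_nonneg _, hNd.2.1 x y])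
    _ = _ := by ring

theorem isReasonableCrossnorm_opNormOn_opT (hNd : IsReasonableCrossnorm 𝕜 Nd)
    (hNc : IsReasonableCrossnorm 𝕜 Nc) (hu : IsUniformPair 𝕜 Nd Nc) :
    IsReasonableCrossnorm 𝕜
      (fun L : (E →L[𝕜] G) ⊗[𝕜] (F →L[𝕜] H) => opNormOn 𝕜 Nd Nc (opT 𝕜 L)) := by
  have hbdd := hu.isBddOn_opT hNc.1
  refine ⟨⟨fun L => ⟨fun hL => ?_, ?_⟩, fun c L => ?_, fun L₁ L₂ => ?_⟩, fun A B => ?_,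
    norm_dualTensorFun_le_opNormOn_opT hNd hNc hu⟩
  · refine eq_zero_of_forall_dualTensorFun_eq_zero fun f g => norm_le_zero_iff.mp ?_
    simpa [hL] using norm_dualTensorFun_le_opNormOn_opT hNd hNc hu f g L
  · rintro rfl
    simp only [map_zero, opNormOn_zero hNc.1]
  · simp only [map_smul, opNormOn_smul hNc.1]
  · simp only [map_add]
    exact opNormOn_add_le hNd.1.nonneg hNc.1 (hbdd L₁) (hbdd L₂)
  · exact opNormOn_le_of_bound (by positivity) fun u => by simpa [opT_tmul] using hu A B u

end

/-- particular case `V = X`, `W = Y`: the operator norm on `B[X ⊗_α Y]`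
restricted to `B[X] ⊗ B[Y]` is a reasonable crossnorm. -/
theorem stmt10 (N : X ⊗[𝕜] Y → ℝ) (hN : IsReasonableCrossnorm 𝕜 N)
    (hu : IsUniformPair 𝕜 N N) :
    IsReasonableCrossnorm 𝕜
      (fun L : (X →L[𝕜] X) ⊗[𝕜] (Y →L[𝕜] Y) => opNormOn 𝕜 N N (opT 𝕜 L)) :=
  isReasonableCrossnorm_opNormOn_opT hN hN hu
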